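/- Let p > N ≥ 1, R > 0, and Ω = {ξ ∈ ℝ^N : |ξ| > R}. For every C¹ function u compactly supported in Ω, ((p-N)/p)^p ∫_Ω |u|^p / (|ξ| - R)^p dξ ≤ ∫_Ω |∇u|^p dξ, using the pointwise inequality |ξ|^{(p-N)/(p-1)} - R^{(p-N)/(p-1)} ≤ |ξ|^{(1-N)/(p-1)} (|ξ| - R) valid for |ξ| > R. -/

import Mathlib

/-
Put `α = (p - N) / (p - 1)` and `d x = (‖x‖ ^ α - R ^ α) / α`. On `Ω = {R < ‖x‖}` the weight `d` is
positive and `p`-harmonic: its `p`-gradient `W = ‖∇d‖ ^ (p - 2) • ∇d = ‖x‖ ^ (-N) • x` is divergence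
free, and `⟪∇d, W⟫ = ‖x‖ ^ (α - N) = ‖W‖ ^ (p / (p - 1))`.
For `u ∈ C¹_c(Ω)` the divergence of the compactly supported field `|u| ^ p d ^ (1 - p) W` integrates
to zero, i.e. `(p - 1) ∫ |u| ^ p ⟪∇d, W⟫ / d ^ p = ∫ d ^ (1 - p) ⟪∇(|u| ^ p), W⟫`. As
`‖∇(|u| ^ p)‖ ≤ p |u| ^ (p - 1) ‖∇u‖`, Hölder's inequality bounds the right-hand side by
`p (∫ |u| ^ p ⟪∇d, W⟫ / d ^ p) ^ ((p - 1) / p) (∫ ‖∇u‖ ^ p) ^ (1 / p)`, so that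
`((p - 1) / p) ^ p ∫ |u| ^ p ⟪∇d, W⟫ / d ^ p ≤ ∫ ‖∇u‖ ^ p`. Finally the concavity bound
`‖x‖ ^ α - R ^ α ≤ ‖x‖ ^ (α - 1) (‖x‖ - R)` gives `⟪∇d, W⟫ / d ^ p ≥ α ^ p / (‖x‖ - R) ^ p`,
and `(p - 1) α = p - N`.
-/

open Real MeasureTheory

theorem rpow_sub_rpow_le_rpow_sub_one_mul_sub {r R α : ℝ} (hR : 0 < R) (hRr : R ≤ r)
    (hα : α ≤ 1) : r ^ α - R ^ α ≤ r ^ (α - 1) * (r - R) := by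
  have hr : 0 < r := hR.trans_le hRr
  have hmono : r ^ (α - 1) ≤ R ^ (α - 1) := rpow_le_rpow_of_nonpos hR hRr (by linarith)
  have hsplit (t : ℝ) (ht : 0 < t) : t ^ α = t ^ (α - 1) * t := by
    rw [← rpow_add_one ht.ne', sub_add_cancel]
  rw [hsplit r hr, hsplit R hR]
  nlinarith [rpow_nonneg hr.le (α - 1)]

theorem rpow_one_sub_mul_le_rpow {p a δ w ρ : ℝ} (hp : 1 < p) (ha : 0 ≤ a) (hδ : 0 < δ)
    (hw : 0 ≤ w) (hwρ : w ^ (p / (p - 1)) ≤ ρ) :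
    δ ^ (1 - p) * (a ^ (p - 1) * w) ≤ (a ^ p * ρ / δ ^ p) ^ ((p - 1) / p) := by
  have hq : 0 ≤ (p - 1) / p := div_nonneg (by linarith) (by linarith)
  have hρ : 0 ≤ ρ := (rpow_nonneg hw _).trans hwρ
  have hw_le : w ≤ ρ ^ ((p - 1) / p) := by
    calc w = (w ^ (p / (p - 1))) ^ ((p - 1) / p) := by
          rw [← rpow_mul hw, div_mul_div_cancel₀' (by linarith : p ≠ 0), div_self (by linarith),
            rpow_one]
      _ ≤ ρ ^ ((p - 1) / p) := rpow_le_rpow (rpow_nonneg hw _) hwρ hq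
  rw [div_rpow (by positivity) (by positivity), mul_rpow (by positivity) hρ, ← rpow_mul ha,
    ← rpow_mul hδ.le, mul_div_cancel₀ _ (by linarith : p ≠ 0), div_eq_mul_inv, ← rpow_neg hδ.le,
    neg_sub]
  calc δ ^ (1 - p) * (a ^ (p - 1) * w) = a ^ (p - 1) * w * δ ^ (1 - p) := by ring
    _ ≤ a ^ (p - 1) * ρ ^ ((p - 1) / p) * δ ^ (1 - p) := by gcongr

theorem div_rpow_mul_le_of_mul_le_mul_rpow {p c I J : ℝ} (hp : 1 < p) (hc : 0 < c) (hI : 0 ≤ I)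
    (hJ : 0 ≤ J) (h : c * I ≤ p * (I ^ ((p - 1) / p) * J ^ (1 / p))) : (c / p) ^ p * I ≤ J := by
  have hp0 : 0 < p := by linarith
  rcases hI.eq_or_lt with rfl | hIpos
  · simpa using hJ
  have hsplit : I = I ^ ((p - 1) / p) * I ^ (1 / p) := by
    rw [← rpow_add hIpos, ← add_div, sub_add_cancel, div_self hp0.ne', rpow_one]
  have h2 : c * I ^ (1 / p) ≤ p * J ^ (1 / p) := by
    refine le_of_mul_le_mul_right ?_ (rpow_pos_of_pos hIpos ((p - 1) / p))
    calc c * I ^ (1 / p) * I ^ ((p - 1) / p) = c * (I ^ ((p - 1) / p) * I ^ (1 / p)) := by ring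
      _ = c * I := by rw [← hsplit]
      _ ≤ _ := h
      _ = _ := by ring
  have h3 := rpow_le_rpow (by positivity) h2 hp0.le
  rw [mul_rpow hc.le (by positivity), mul_rpow hp0.le (by positivity), ← rpow_mul hIpos.le,
    ← rpow_mul hJ, one_div_mul_cancel hp0.ne', rpow_one, rpow_one] at h3
  rw [div_rpow hc.le hp0.le, div_mul_eq_mul_div, div_le_iff₀ (by positivity)]
  linarith

theorem norm_gradient {𝕜 F : Type*} [RCLike 𝕜] [NormedAddCommGroup F] [InnerProductSpace 𝕜 F]
    [CompleteSpace F] (f : F → 𝕜) (x : F) : ‖gradient f x‖ = ‖fderiv 𝕜 f x‖ :=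
  (InnerProductSpace.toDual 𝕜 F).symm.norm_map _

section VanishingOutside

variable {E G : Type*} {Ω K : Set E} {f : E → G}

theorem ContinuousOn.continuous_of_eq_zero_off [TopologicalSpace E] [TopologicalSpace G] [Zero G]
    (hf : ContinuousOn f Ω) (hΩ : IsOpen Ω) (hK : IsClosed K) (hKΩ : K ⊆ Ω)
    (h0 : ∀ x ∉ K, f x = 0) : Continuous f :=
  hf.continuous_of_tsupport_subset hΩ
    ((closure_minimal (Function.support_subset_iff'.2 h0) hK).trans hKΩ)

theorem ContDiffOn.contDiff_of_eq_zero_off {𝕜 : Type*} [NontriviallyNormedField 𝕜]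
    [NormedAddCommGroup E] [NormedSpace 𝕜 E] [NormedAddCommGroup G] [NormedSpace 𝕜 G]
    {n : WithTop ℕ∞} (hf : ContDiffOn 𝕜 n f Ω) (hΩ : IsOpen Ω) (hK : IsClosed K) (hKΩ : K ⊆ Ω)
    (h0 : ∀ x ∉ K, f x = 0) : ContDiff 𝕜 n f := by
  refine contDiff_iff_contDiffAt.2 fun x => ?_
  by_cases hx : x ∈ K
  · exact hf.contDiffAt (hΩ.mem_nhds (hKΩ hx))
  · exact contDiffAt_const.congr_of_eventuallyEq
      (Filter.eventuallyEq_of_mem (hK.isOpen_compl.mem_nhds hx) h0)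

theorem ContinuousOn.integrable_of_eq_zero_off [TopologicalSpace E] [T2Space E] [MeasurableSpace E]
    [OpensMeasurableSpace E] {μ : Measure E} [IsFiniteMeasureOnCompacts μ] [NormedAddCommGroup G]
    (hf : ContinuousOn f Ω) (hΩ : IsOpen Ω) (hK : IsCompact K) (hKΩ : K ⊆ Ω)
    (h0 : ∀ x ∉ K, f x = 0) : Integrable f μ :=
  (hf.continuous_of_eq_zero_off hΩ hK.isClosed hKΩ h0).integrable_of_hasCompactSupport
    (HasCompactSupport.intro hK h0)

end VanishingOutside

theorem integral_fderiv_apply_eq_zero {E : Type*} [NormedAddCommGroup E] [NormedSpace ℝ E]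
    [FiniteDimensional ℝ E] [MeasurableSpace E] [BorelSpace E] {μ : Measure E} [μ.IsAddHaarMeasure]
    {f : E → ℝ} (hf : ContDiff ℝ 1 f) (hcs : HasCompactSupport f) (v : E) :
    ∫ x, fderiv ℝ f x v ∂μ = 0 := by
  have h := integral_mul_fderiv_eq_neg_fderiv_mul_of_integrable (μ := μ) (f := f)
    (g := fun _ => (1:ℝ)) (v := v) ?_ (by simp) ?_ (fun x _ => hf.differentiable one_ne_zero x)
    (fun x _ => differentiableAt_const _)
  · simpa using h.symm
  · simpa using ((hf.continuous_fderiv one_ne_zero).clm_apply continuous_const)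
      |>.integrable_of_hasCompactSupport (hcs.fderiv_apply ℝ v)
  · simpa using hf.continuous.integrable_of_hasCompactSupport hcs

theorem integral_rpow_mul_le_of_continuous {E : Type*} [TopologicalSpace E] [MeasurableSpace E]
    [OpensMeasurableSpace E] {μ : Measure E} [IsFiniteMeasureOnCompacts μ] {p : ℝ} (hp : 1 < p)
    {f g : E → ℝ} (hf : Continuous f) (hf₀ : ∀ x, 0 ≤ f x) (hf_cs : HasCompactSupport f)
    (hg : Continuous g) (hg₀ : ∀ x, 0 ≤ g x) (hg_cs : HasCompactSupport g) :
    ∫ x, f x ^ ((p - 1) / p) * g x ∂μ ≤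
      (∫ x, f x ∂μ) ^ ((p - 1) / p) * (∫ x, g x ^ p ∂μ) ^ (1 / p) := by
  have hq : 0 < (p - 1) / p := div_pos (by linarith) (by linarith)
  have h := integral_mul_le_Lp_mul_Lq_of_nonneg (μ := μ) (Real.HolderConjugate.conjExponent hp).symm
    (ae_of_all _ fun x => rpow_nonneg (hf₀ x) _) (ae_of_all _ hg₀)
    ((hf.rpow_const fun _ => Or.inr hq.le).memLp_of_hasCompactSupport
      (hf_cs.comp_left (g := fun t : ℝ => t ^ ((p - 1) / p)) (zero_rpow hq.ne')))
    (hg.memLp_of_hasCompactSupport hg_cs)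
  simpa only [Real.conjExponent, ← rpow_mul (hf₀ _), one_div_div,
    div_mul_div_cancel₀' (by linarith : p - 1 ≠ 0), div_self (by linarith : p ≠ 0),
    rpow_one] using h

section Divergence

variable {ι : Type*} [Fintype ι] [DecidableEq ι]

noncomputable def divergence (F : EuclideanSpace ℝ ι → EuclideanSpace ℝ ι)
    (x : EuclideanSpace ℝ ι) : ℝ :=
  ∑ i, fderiv ℝ F x (EuclideanSpace.single i 1) i

theorem sum_apply_single_mul (L : EuclideanSpace ℝ ι →L[ℝ] ℝ) (y : EuclideanSpace ℝ ι) :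
    ∑ i, L (EuclideanSpace.single i 1) * y i = L y := by
  conv_rhs => rw [← (EuclideanSpace.basisFun ι ℝ).sum_repr y]
  simp [map_sum, mul_comm]

theorem divergence_smul {φ : EuclideanSpace ℝ ι → ℝ} {G : EuclideanSpace ℝ ι → EuclideanSpace ℝ ι}
    {x : EuclideanSpace ℝ ι} (hφ : DifferentiableAt ℝ φ x) (hG : DifferentiableAt ℝ G x) :
    divergence (fun y => φ y • G y) x = fderiv ℝ φ x (G x) + φ x * divergence G x := by
  rw [divergence, divergence, ← sum_apply_single_mul (fderiv ℝ φ x), Finset.mul_sum,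
    ← Finset.sum_add_distrib]
  simp [fderiv_fun_smul hφ hG, add_comm]

theorem divergence_id (x : EuclideanSpace ℝ ι) : divergence (fun y => y) x = Fintype.card ι := by
  simp [divergence]

theorem integral_divergence_eq_zero {F : EuclideanSpace ℝ ι → EuclideanSpace ℝ ι}
    (hF : ContDiff ℝ 1 F) (hcs : HasCompactSupport F) : ∫ x, divergence F x = 0 := by
  have hcomp (i : ι) : ContDiff ℝ 1 (EuclideanSpace.proj (𝕜 := ℝ) i ∘ F) :=
    (EuclideanSpace.proj i).contDiff.comp hF
  have hcs_comp (i : ι) : HasCompactSupport (EuclideanSpace.proj (𝕜 := ℝ) i ∘ F) :=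
    hcs.comp_left (map_zero _)
  have hfderiv (i : ι) (x v : EuclideanSpace ℝ ι) :
      fderiv ℝ F x v i = fderiv ℝ (EuclideanSpace.proj (𝕜 := ℝ) i ∘ F) x v := by
    rw [fderiv_comp _ (EuclideanSpace.proj i).differentiableAt (hF.differentiable one_ne_zero x),
      ContinuousLinearMap.fderiv]
    rfl
  unfold divergence
  simp_rw [hfderiv]
  rw [integral_finsetSum]
  · exact Finset.sum_eq_zero fun i _ => integral_fderiv_apply_eq_zero (hcomp i) (hcs_comp i) _
  · exact fun i _ => (((hcomp i).continuous_fderiv one_ne_zero).clm_apply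
      continuous_const).integrable_of_hasCompactSupport ((hcs_comp i).fderiv_apply ℝ _)

end Divergence

section WeightedIntegrand

variable {E F : Type*} [NormedAddCommGroup E] [NormedSpace ℝ E] [NormedAddCommGroup F]
  {Ω : Set E} {u : E → F} {d : E → ℝ} {W : E → E} {p : ℝ}

theorem continuous_norm_rpow_mul_fderiv_div_rpow (hp : 0 < p) (hΩ : IsOpen Ω) (hu : Continuous u)
    (hsupp : tsupport u ⊆ Ω) (hd : ContDiffOn ℝ 1 d Ω) (hd_pos : ∀ x ∈ Ω, 0 < d x)
    (hW : ContinuousOn W Ω) : Continuous fun x => ‖u x‖ ^ p * fderiv ℝ d x (W x) / d x ^ p :=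
  ((((hu.norm.rpow_const fun _ => Or.inr hp.le).continuousOn).mul
    ((hd.continuousOn_fderiv_of_isOpen hΩ le_rfl).clm_apply hW)).div
    (hd.continuousOn.rpow_const fun x hx => Or.inl (hd_pos x hx).ne')
    fun x hx => (rpow_pos_of_pos (hd_pos x hx) _).ne').continuous_of_eq_zero_off hΩ
    isClosed_closure hsupp fun x hx => by
      simp [image_eq_zero_of_notMem_tsupport hx, zero_rpow hp.ne']

theorem integrable_norm_rpow_mul_fderiv_div_rpow [MeasurableSpace E] [OpensMeasurableSpace E]
    {μ : Measure E} [IsFiniteMeasureOnCompacts μ] (hp : 0 < p) (hΩ : IsOpen Ω) (hu : Continuous u)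
    (hcs : HasCompactSupport u) (hsupp : tsupport u ⊆ Ω) (hd : ContDiffOn ℝ 1 d Ω)
    (hd_pos : ∀ x ∈ Ω, 0 < d x) (hW : ContinuousOn W Ω) :
    Integrable (fun x => ‖u x‖ ^ p * fderiv ℝ d x (W x) / d x ^ p) μ :=
  (continuous_norm_rpow_mul_fderiv_div_rpow hp hΩ hu hsupp hd hd_pos hW)
    |>.integrable_of_hasCompactSupport (HasCompactSupport.intro hcs fun x hx => by
      simp [image_eq_zero_of_notMem_tsupport hx, zero_rpow hp.ne'])

theorem norm_rpow_mul_fderiv_div_rpow_nonneg (hp : 0 < p) (hsupp : tsupport u ⊆ Ω)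
    (hd_pos : ∀ x ∈ Ω, 0 < d x) (hWd : ∀ x ∈ Ω, ‖W x‖ ^ (p / (p - 1)) ≤ fderiv ℝ d x (W x))
    (x : E) : 0 ≤ ‖u x‖ ^ p * fderiv ℝ d x (W x) / d x ^ p := by
  by_cases hx : x ∈ tsupport u
  · have hxΩ := hsupp hx
    exact div_nonneg (mul_nonneg (by positivity) ((by positivity : (0:ℝ) ≤ _).trans (hWd x hxΩ)))
      (rpow_pos_of_pos (hd_pos x hxΩ) _).le
  · simp [image_eq_zero_of_notMem_tsupport hx, zero_rpow hp.ne']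

variable [InnerProductSpace ℝ F]

theorem norm_rpow_mul_fderiv_norm_rpow_apply_le (hp : 1 < p) (hu : Differentiable ℝ u)
    (hsupp : tsupport u ⊆ Ω) (hd_pos : ∀ x ∈ Ω, 0 < d x)
    (hWd : ∀ x ∈ Ω, ‖W x‖ ^ (p / (p - 1)) ≤ fderiv ℝ d x (W x)) (x : E) :
    ‖d x ^ (1 - p) * fderiv ℝ (fun y => ‖u y‖ ^ p) x (W x)‖ ≤
      p * ((‖u x‖ ^ p * fderiv ℝ d x (W x) / d x ^ p) ^ ((p - 1) / p) * ‖fderiv ℝ u x‖) := by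
  by_cases hx : x ∈ tsupport u
  · have hxΩ := hsupp hx
    have hdx := hd_pos x hxΩ
    calc ‖d x ^ (1 - p) * fderiv ℝ (fun y => ‖u y‖ ^ p) x (W x)‖
        ≤ d x ^ (1 - p) * (p * ‖u x‖ ^ (p - 1) * ‖fderiv ℝ u x‖ * ‖W x‖) := by
          rw [norm_mul, norm_of_nonneg (rpow_pos_of_pos hdx _).le]
          gcongr
          exact ((fderiv ℝ _ x).le_opNorm _).trans
            (by gcongr; exact norm_fderiv_norm_rpow_le hu hp)
      _ = p * ‖fderiv ℝ u x‖ * (d x ^ (1 - p) * (‖u x‖ ^ (p - 1) * ‖W x‖)) := by ring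
      _ ≤ p * ‖fderiv ℝ u x‖ * (‖u x‖ ^ p * fderiv ℝ d x (W x) / d x ^ p) ^ ((p - 1) / p) := by
          gcongr
          exact rpow_one_sub_mul_le_rpow hp (norm_nonneg _) hdx (norm_nonneg _) (hWd x hxΩ)
      _ = _ := by ring
  · have hq : (p - 1) / p ≠ 0 := (div_pos (by linarith) (by linarith)).ne'
    simp [hu.fderiv_norm_rpow hp, image_eq_zero_of_notMem_tsupport hx,
      zero_rpow (by linarith : p ≠ 0), zero_rpow hq]

end WeightedIntegrand

section Hardy

variable {ι : Type*} [Fintype ι] [DecidableEq ι] {F : Type*} [NormedAddCommGroup F]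
  [InnerProductSpace ℝ F] {Ω : Set (EuclideanSpace ℝ ι)} {u : EuclideanSpace ℝ ι → F}
  {d : EuclideanSpace ℝ ι → ℝ} {W : EuclideanSpace ℝ ι → EuclideanSpace ℝ ι} {p : ℝ}

theorem divergence_norm_rpow_mul_rpow_smul (hp : 1 < p) (hΩ : IsOpen Ω) (hu : ContDiff ℝ 1 u)
    (hsupp : tsupport u ⊆ Ω) (hd : ContDiffOn ℝ 1 d Ω) (hd_pos : ∀ x ∈ Ω, 0 < d x)
    (hW : ContDiffOn ℝ 1 W Ω) (hW_div : ∀ x ∈ Ω, divergence W x = 0) (x : EuclideanSpace ℝ ι) :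
    divergence (fun y => (‖u y‖ ^ p * d y ^ (1 - p)) • W y) x =
      d x ^ (1 - p) * fderiv ℝ (fun y => ‖u y‖ ^ p) x (W x) -
        (p - 1) * (‖u x‖ ^ p * fderiv ℝ d x (W x) / d x ^ p) := by
  by_cases hx : x ∈ tsupport u
  · have hxΩ : Ω ∈ nhds x := hΩ.mem_nhds (hsupp hx)
    have hdx := hd_pos x (hsupp hx)
    have hφ := ((hu.norm_rpow hp).differentiable one_ne_zero x).hasFDerivAt
    have hdρ := ((hd.contDiffAt hxΩ).differentiableAt one_ne_zero).hasFDerivAt.rpow_const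
      (p := 1 - p) (Or.inl hdx.ne')
    have hprod : HasFDerivAt (fun y => ‖u y‖ ^ p * d y ^ (1 - p)) _ x := hφ.mul hdρ
    rw [divergence_smul hprod.differentiableAt
      ((hW.contDiffAt hxΩ).differentiableAt one_ne_zero), hW_div x (hsupp hx), hprod.fderiv]
    simp only [add_apply, smul_apply, smul_eq_mul, mul_zero, add_zero]
    rw [show 1 - p - 1 = -p by ring, rpow_neg hdx.le]
    field_simp
    ring
  · have hu0 : u =ᶠ[nhds x] 0 := notMem_tsupport_iff_eventuallyEq.mp hx
    have hφ0 : (fun y => ‖u y‖ ^ p) =ᶠ[nhds x] fun _ => 0 := by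
      filter_upwards [hu0] with y hy
      simp [hy, zero_rpow (by linarith : p ≠ 0)]
    have hF0 : (fun y => (‖u y‖ ^ p * d y ^ (1 - p)) • W y) =ᶠ[nhds x] fun _ => 0 := by
      filter_upwards [hφ0] with y hy
      simp [hy]
    simp [divergence, hF0.fderiv_eq, hφ0.fderiv_eq, hu0.eq_of_nhds, zero_rpow (by linarith : p ≠ 0)]

theorem integral_rpow_mul_fderiv_norm_rpow_eq (hp : 1 < p) (hΩ : IsOpen Ω) (hu : ContDiff ℝ 1 u)
    (hcs : HasCompactSupport u) (hsupp : tsupport u ⊆ Ω) (hd : ContDiffOn ℝ 1 d Ω)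
    (hd_pos : ∀ x ∈ Ω, 0 < d x) (hW : ContDiffOn ℝ 1 W Ω)
    (hW_div : ∀ x ∈ Ω, divergence W x = 0) :
    ∫ x, d x ^ (1 - p) * fderiv ℝ (fun y => ‖u y‖ ^ p) x (W x) =
      (p - 1) * ∫ x, ‖u x‖ ^ p * fderiv ℝ d x (W x) / d x ^ p := by
  have hp0 : p ≠ 0 := by linarith
  have hφ := hu.norm_rpow hp
  have hK := isClosed_closure (s := Function.support u)
  have hu0 (x) (hx : x ∉ tsupport u) : u x = 0 := image_eq_zero_of_notMem_tsupport hx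
  have hdp (q : ℝ) : ContDiffOn ℝ 1 (fun x => d x ^ q) Ω :=
    hd.rpow_const_of_ne fun x hx => (hd_pos x hx).ne'
  have hfield : ContDiff ℝ 1 (fun y => (‖u y‖ ^ p * d y ^ (1 - p)) • W y) :=
    ((hφ.contDiffOn.mul (hdp _)).smul hW).contDiff_of_eq_zero_off hΩ hK hsupp fun x hx => by
      simp [hu0 x hx, zero_rpow hp0]
  have hint₁ : Integrable fun x => d x ^ (1 - p) * fderiv ℝ (fun y => ‖u y‖ ^ p) x (W x) :=
    ((hdp _).continuousOn.mul ((hφ.continuous_fderiv one_ne_zero).continuousOn.clm_apply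
      hW.continuousOn)).integrable_of_eq_zero_off hΩ hcs hsupp fun x hx => by
        simp [(hu.differentiable one_ne_zero).fderiv_norm_rpow hp, hu0 x hx]
  have hint₂ : Integrable fun x => ‖u x‖ ^ p * fderiv ℝ d x (W x) / d x ^ p :=
    integrable_norm_rpow_mul_fderiv_div_rpow (by linarith) hΩ hu.continuous hcs hsupp hd hd_pos
      hW.continuousOn
  have h := integral_divergence_eq_zero hfield
    (HasCompactSupport.intro hcs fun x hx => by simp [hu0 x hx, zero_rpow hp0])
  simp_rw [divergence_norm_rpow_mul_rpow_smul hp hΩ hu hsupp hd hd_pos hW hW_div] at h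
  rw [integral_sub hint₁ (hint₂.const_mul _), integral_const_mul] at h
  linarith

theorem hardy_inequality_of_divergence_free (hp : 1 < p) (hΩ : IsOpen Ω) (hu : ContDiff ℝ 1 u)
    (hcs : HasCompactSupport u) (hsupp : tsupport u ⊆ Ω) (hd : ContDiffOn ℝ 1 d Ω)
    (hd_pos : ∀ x ∈ Ω, 0 < d x) (hW : ContDiffOn ℝ 1 W Ω)
    (hW_div : ∀ x ∈ Ω, divergence W x = 0)
    (hWd : ∀ x ∈ Ω, ‖W x‖ ^ (p / (p - 1)) ≤ fderiv ℝ d x (W x)) :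
    ((p - 1) / p) ^ p * ∫ x, ‖u x‖ ^ p * fderiv ℝ d x (W x) / d x ^ p ≤
      ∫ x, ‖fderiv ℝ u x‖ ^ p := by
  set A := fun x => ‖u x‖ ^ p * fderiv ℝ d x (W x) / d x ^ p
  have hp₀ : 0 < p := by linarith
  have hA_nonneg := norm_rpow_mul_fderiv_div_rpow_nonneg hp₀ hsupp hd_pos hWd
  have hA_cont : Continuous A := continuous_norm_rpow_mul_fderiv_div_rpow hp₀ hΩ hu.continuous
    hsupp hd hd_pos hW.continuousOn
  have hA_cs : HasCompactSupport A := HasCompactSupport.intro hcs fun x hx => by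
    simp [A, image_eq_zero_of_notMem_tsupport hx, zero_rpow hp₀.ne']
  have hDu_cont := (hu.continuous_fderiv one_ne_zero).norm
  refine div_rpow_mul_le_of_mul_le_mul_rpow hp (by linarith) (integral_nonneg hA_nonneg)
    (integral_nonneg fun _ => by positivity) ?_
  calc (p - 1) * ∫ x, A x
      = ∫ x, d x ^ (1 - p) * fderiv ℝ (fun y => ‖u y‖ ^ p) x (W x) :=
        (integral_rpow_mul_fderiv_norm_rpow_eq hp hΩ hu hcs hsupp hd hd_pos hW hW_div).symm
    _ ≤ ∫ x, ‖d x ^ (1 - p) * fderiv ℝ (fun y => ‖u y‖ ^ p) x (W x)‖ :=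
        (le_norm_self _).trans (norm_integral_le_integral_norm _)
    _ ≤ ∫ x, p * (A x ^ ((p - 1) / p) * ‖fderiv ℝ u x‖) :=
        integral_mono_of_nonneg (ae_of_all _ fun _ => norm_nonneg _)
          ((((hA_cont.rpow_const fun _ => Or.inr (by positivity)).mul hDu_cont).const_mul p)
            |>.integrable_of_hasCompactSupport (hcs.fderiv (𝕜 := ℝ)).norm.mul_left.mul_left)
          (ae_of_all _ (norm_rpow_mul_fderiv_norm_rpow_apply_le hp (hu.differentiable one_ne_zero)
            hsupp hd_pos hWd))
    _ = p * ∫ x, A x ^ ((p - 1) / p) * ‖fderiv ℝ u x‖ := integral_const_mul _ _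
    _ ≤ p * ((∫ x, A x) ^ ((p - 1) / p) * (∫ x, ‖fderiv ℝ u x‖ ^ p) ^ (1 / p)) := by
        gcongr
        exact integral_rpow_mul_le_of_continuous hp hA_cont hA_nonneg hA_cs hDu_cont
          (fun _ => norm_nonneg _) (hcs.fderiv (𝕜 := ℝ)).norm

end Hardy

section Radial

variable {E : Type*} [NormedAddCommGroup E] {x : E}

-- Normalized by `1 / α` so that, for `α = (p - N) / (p - 1)`, its `p`-gradient is exactly
-- `radialField (-N)`.
noncomputable def exteriorWeight (α R : ℝ) (x : E) : ℝ := (‖x‖ ^ α - R ^ α) / α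

theorem exteriorWeight_pos {α R : ℝ} (hα : 0 < α) (hR : 0 ≤ R) (hx : R < ‖x‖) :
    0 < exteriorWeight α R x :=
  div_pos (sub_pos.2 (rpow_lt_rpow hR hx hα)) hα

variable [InnerProductSpace ℝ E]

theorem hasFDerivAt_norm_rpow_of_ne_zero (s : ℝ) (hx : x ≠ 0) :
    HasFDerivAt (fun y : E => ‖y‖ ^ s) ((s * ‖x‖ ^ (s - 2)) • innerSL ℝ x) x := by
  have hx' : 0 < ‖x‖ := norm_pos_iff.mpr hx
  convert (hasStrictFDerivAt_norm_sq x).hasFDerivAt.rpow_const (p := s / 2)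
    (Or.inl (by positivity)) using 1
  · ext y
    rw [← rpow_natCast, ← rpow_mul (norm_nonneg y)]
    norm_num [mul_div_cancel₀]
  · ext v
    simp only [smul_apply, innerSL_apply_apply, smul_eq_mul]
    rw [← rpow_natCast, ← rpow_mul hx'.le, nsmul_eq_mul]
    push_cast
    ring_nf

theorem contDiffAt_norm_rpow {n : WithTop ℕ∞} (s : ℝ) (hx : x ≠ 0) :
    ContDiffAt ℝ n (fun y : E => ‖y‖ ^ s) x :=
  (contDiffAt_norm ℝ hx).rpow_const_of_ne (norm_ne_zero_iff.2 hx)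

noncomputable def radialField (s : ℝ) (x : E) : E := ‖x‖ ^ s • x

theorem contDiffAt_radialField {n : WithTop ℕ∞} {s : ℝ} (hx : x ≠ 0) :
    ContDiffAt ℝ n (radialField s) x :=
  (contDiffAt_norm_rpow s hx).smul contDiffAt_id

theorem norm_radialField {s : ℝ} (hx : x ≠ 0) : ‖radialField s x‖ = ‖x‖ ^ (s + 1) := by
  rw [radialField, norm_smul, norm_of_nonneg (rpow_nonneg (norm_nonneg x) s),
    rpow_add_one (norm_ne_zero_iff.mpr hx)]

theorem contDiffAt_exteriorWeight {n : WithTop ℕ∞} {α R : ℝ} (hx : x ≠ 0) :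
    ContDiffAt ℝ n (exteriorWeight α R) x :=
  ((contDiffAt_norm_rpow α hx).sub contDiffAt_const).div_const α

theorem fderiv_exteriorWeight_radialField {α R s : ℝ} (hα : α ≠ 0) (hx : x ≠ 0) :
    fderiv ℝ (exteriorWeight α R) x (radialField s x) = ‖x‖ ^ (α + s) := by
  have hx' : 0 < ‖x‖ := norm_pos_iff.mpr hx
  have h := ((hasFDerivAt_norm_rpow_of_ne_zero α hx).sub_const (R ^ α)).mul_const α⁻¹
  simp_rw [← div_eq_mul_inv] at h
  rw [show exteriorWeight α R = fun y : E => (‖y‖ ^ α - R ^ α) / α from rfl, h.fderiv]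
  simp only [radialField, smul_apply, innerSL_apply_apply, smul_eq_mul, inner_smul_right,
    real_inner_self_eq_norm_sq]
  rw [← rpow_natCast, ← mul_assoc, ← mul_assoc, inv_mul_cancel_left₀ hα, ← rpow_add hx',
    ← rpow_add hx']
  ring_nf

theorem div_sub_rpow_le_fderiv_exteriorWeight_div_rpow {α R p s : ℝ} (hR : 0 < R)
    (hx : R < ‖x‖) (hα₀ : 0 < α) (hα₁ : α ≤ 1) (hp : 0 < p) (hs : α + s = (α - 1) * p) :
    (α / (‖x‖ - R)) ^ p ≤
      fderiv ℝ (exteriorWeight α R) x (radialField s x) / exteriorWeight α R x ^ p := by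
  have hr : 0 < ‖x‖ := hR.trans hx
  rw [fderiv_exteriorWeight_radialField hα₀.ne' (norm_pos_iff.1 hr), hs]
  have hle : exteriorWeight α R x ≤ ‖x‖ ^ (α - 1) * (‖x‖ - R) / α :=
    div_le_div_of_nonneg_right (rpow_sub_rpow_le_rpow_sub_one_mul_sub hR hx.le hα₁) hα₀.le
  calc (α / (‖x‖ - R)) ^ p = ‖x‖ ^ ((α - 1) * p) / (‖x‖ ^ (α - 1) * (‖x‖ - R) / α) ^ p := by
        rw [div_rpow (by positivity) (by linarith), div_rpow (by positivity) hα₀.le,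
          mul_rpow (by positivity) (by linarith), ← rpow_mul hr.le]
        field_simp
    _ ≤ ‖x‖ ^ ((α - 1) * p) / exteriorWeight α R x ^ p := by
        have := exteriorWeight_pos hα₀ hR.le hx
        gcongr

end Radial

section ExteriorBall

variable {ι : Type*} [Fintype ι] [DecidableEq ι] {F : Type*} [NormedAddCommGroup F]
  [InnerProductSpace ℝ F] {p R α : ℝ} {u : EuclideanSpace ℝ ι → F}

theorem divergence_radialField_neg_card {x : EuclideanSpace ℝ ι} (hx : x ≠ 0) :
    divergence (radialField (-(Fintype.card ι : ℝ))) x = 0 := by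
  have hφ := hasFDerivAt_norm_rpow_of_ne_zero (-(Fintype.card ι : ℝ)) hx
  change divergence (fun y => ‖y‖ ^ (-(Fintype.card ι : ℝ)) • y) x = 0
  rw [divergence_smul hφ.differentiableAt differentiableAt_fun_id, hφ.fderiv,
    divergence_id]
  have hx' : 0 < ‖x‖ := norm_pos_iff.mpr hx
  simp only [smul_apply, innerSL_apply_apply, real_inner_self_eq_norm_sq, smul_eq_mul]
  rw [mul_assoc, ← rpow_natCast ‖x‖ 2, ← rpow_add hx']
  ring_nf

theorem hardy_exterior_ball_weighted (hn : 1 ≤ Fintype.card ι) (hp : (Fintype.card ι : ℝ) < p)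
    (hα : α = (p - Fintype.card ι) / (p - 1)) (hR : 0 ≤ R) (hu : ContDiff ℝ 1 u)
    (hcs : HasCompactSupport u) (hsupp : tsupport u ⊆ {x | R < ‖x‖}) :
    ((p - 1) / p) ^ p * ∫ x, ‖u x‖ ^ p *
        fderiv ℝ (exteriorWeight α R) x (radialField (-(Fintype.card ι : ℝ)) x) /
          exteriorWeight α R x ^ p ≤
      ∫ x, ‖fderiv ℝ u x‖ ^ p := by
  have hn₁ : (1 : ℝ) ≤ Fintype.card ι := Nat.one_le_cast.2 hn
  have hp₁ : p - 1 ≠ 0 := by linarith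
  have hα₀ : 0 < α := hα ▸ div_pos (by linarith) (by linarith)
  have hΩ₀ (x : EuclideanSpace ℝ ι) (hx : R < ‖x‖) : x ≠ 0 := norm_pos_iff.1 (hR.trans_lt hx)
  refine hardy_inequality_of_divergence_free (by linarith)
    (isOpen_lt continuous_const continuous_norm) hu hcs hsupp
    (fun x hx => (contDiffAt_exteriorWeight (hΩ₀ x hx)).contDiffWithinAt)
    (fun x hx => exteriorWeight_pos hα₀ hR hx)
    (fun x hx => (contDiffAt_radialField (hΩ₀ x hx)).contDiffWithinAt)
    (fun x hx => divergence_radialField_neg_card (hΩ₀ x hx)) fun x hx => ?_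
  rw [fderiv_exteriorWeight_radialField hα₀.ne' (hΩ₀ x hx), norm_radialField (hΩ₀ x hx),
    ← rpow_mul (norm_nonneg x)]
  refine le_of_eq (congrArg _ ?_)
  rw [hα]
  field_simp
  ring

theorem hardy_exterior_ball (hn : 1 ≤ Fintype.card ι) (hp : (Fintype.card ι : ℝ) < p)
    (hR : 0 < R) (hu : ContDiff ℝ 1 u) (hcs : HasCompactSupport u)
    (hsupp : tsupport u ⊆ {x | R < ‖x‖}) :
    ((p - Fintype.card ι) / p) ^ p * ∫ x in {x | R < ‖x‖}, ‖u x‖ ^ p / (‖x‖ - R) ^ p ≤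
      ∫ x, ‖fderiv ℝ u x‖ ^ p := by
  set n : ℝ := (Fintype.card ι : ℝ)
  set Ω : Set (EuclideanSpace ℝ ι) := {x | R < ‖x‖}
  have hn₁ : 1 ≤ n := Nat.one_le_cast.2 hn
  have hp₁ : p - 1 ≠ 0 := by linarith
  have hp₀ : p ≠ 0 := by linarith
  set α := (p - n) / (p - 1) with hα
  have hα₀ : 0 < α := div_pos (by linarith) (by linarith)
  have hα₁ : α ≤ 1 := (div_le_one (by linarith)).2 (by linarith)
  have hq : 0 ≤ (p - 1) / p := div_nonneg (by linarith) (by linarith)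
  have hΩ : IsOpen Ω := isOpen_lt continuous_const continuous_norm
  have hΩ₀ (x) (hx : x ∈ Ω) : x ≠ 0 := norm_pos_iff.1 (hR.trans hx)
  have hpt (x) (hx : x ∈ Ω) : α ^ p * (‖u x‖ ^ p / (‖x‖ - R) ^ p) ≤
      ‖u x‖ ^ p * fderiv ℝ (exteriorWeight α R) x (radialField (-n) x) /
        exteriorWeight α R x ^ p := by
    calc α ^ p * (‖u x‖ ^ p / (‖x‖ - R) ^ p) = ‖u x‖ ^ p * (α / (‖x‖ - R)) ^ p := by
          rw [div_rpow hα₀.le (sub_pos.2 hx).le]; ring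
      _ ≤ _ := by
          rw [mul_div_assoc]
          gcongr
          exact div_sub_rpow_le_fderiv_exteriorWeight_div_rpow hR hx hα₀ hα₁ (by linarith)
            (by rw [hα]; field_simp; ring)
  have hd : ContDiffOn ℝ 1 (exteriorWeight α R) Ω := fun x hx =>
    (contDiffAt_exteriorWeight (hΩ₀ x hx)).contDiffWithinAt
  have hW : ContDiffOn ℝ 1 (radialField (-n)) Ω := fun x hx =>
    (contDiffAt_radialField (hΩ₀ x hx)).contDiffWithinAt
  have hint := integrable_norm_rpow_mul_fderiv_div_rpow (μ := volume) (by linarith : 0 < p) hΩ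
    hu.continuous hcs hsupp hd (fun x hx => exteriorWeight_pos hα₀ hR.le hx) hW.continuousOn
  calc ((p - n) / p) ^ p * ∫ x in Ω, ‖u x‖ ^ p / (‖x‖ - R) ^ p
      = ((p - 1) / p) ^ p * ∫ x in Ω, α ^ p * (‖u x‖ ^ p / (‖x‖ - R) ^ p) := by
        rw [integral_const_mul, ← mul_assoc, ← mul_rpow hq hα₀.le, hα]
        congr 2
        field_simp
    _ ≤ ((p - 1) / p) ^ p * ∫ x in Ω, ‖u x‖ ^ p *
          fderiv ℝ (exteriorWeight α R) x (radialField (-n) x) / exteriorWeight α R x ^ p := by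
        refine mul_le_mul_of_nonneg_left (integral_mono_of_nonneg ?_ ?_
          ((ae_restrict_iff' hΩ.measurableSet).2 (ae_of_all _ hpt))) (rpow_nonneg hq _)
        · refine (ae_restrict_iff' hΩ.measurableSet).2 (ae_of_all _ fun x hx => ?_)
          have : 0 < ‖x‖ - R := sub_pos.2 hx
          positivity
        · exact hint.integrableOn
    _ = ((p - 1) / p) ^ p * ∫ x, ‖u x‖ ^ p *
          fderiv ℝ (exteriorWeight α R) x (radialField (-n) x) / exteriorWeight α R x ^ p := by
        rw [setIntegral_eq_integral_of_forall_compl_eq_zero fun x hx => ?_]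
        simp [image_eq_zero_of_notMem_tsupport fun h => hx (hsupp h), zero_rpow hp₀]
    _ ≤ ∫ x, ‖fderiv ℝ u x‖ ^ p :=
        hardy_exterior_ball_weighted hn hp rfl hR.le hu hcs hsupp

end ExteriorBall

theorem stmt19 (N : ℕ) (hN : 1 ≤ N) (p R : ℝ) (hp : (N : ℝ) < p) (hR : 0 < R)
    (u : EuclideanSpace ℝ (Fin N) → ℝ) (hu : ContDiff ℝ 1 u) (hcs : HasCompactSupport u)
    (hsupp : tsupport u ⊆ {ξ : EuclideanSpace ℝ (Fin N) | R < ‖ξ‖}) :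
    (∀ ξ : EuclideanSpace ℝ (Fin N), R < ‖ξ‖ →
        ‖ξ‖ ^ ((p - N) / (p - 1)) - R ^ ((p - N) / (p - 1)) ≤
          ‖ξ‖ ^ ((1 - N) / (p - 1)) * (‖ξ‖ - R)) ∧
      ((p - N) / p) ^ p *
          ∫ ξ in {ξ : EuclideanSpace ℝ (Fin N) | R < ‖ξ‖}, |u ξ| ^ p / (‖ξ‖ - R) ^ p ≤
        ∫ ξ in {ξ : EuclideanSpace ℝ (Fin N) | R < ‖ξ‖}, ‖gradient u ξ‖ ^ p := by
  have hN₁ : (1 : ℝ) ≤ N := Nat.one_le_cast.2 hN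
  have hp₁ : p - 1 ≠ 0 := by linarith
  refine ⟨fun ξ hξ => ?_, ?_⟩
  · rw [show (1 - (N : ℝ)) / (p - 1) = (p - N) / (p - 1) - 1 by field_simp; ring]
    exact rpow_sub_rpow_le_rpow_sub_one_mul_sub hR hξ.le
      ((div_le_one (by linarith)).2 (by linarith))
  · have h := hardy_exterior_ball (ι := Fin N) (by simpa) (by simpa) hR hu hcs hsupp
    simp only [Fintype.card_fin, Real.norm_eq_abs] at h
    refine h.trans_eq ?_
    rw [setIntegral_eq_integral_of_forall_compl_eq_zero fun ξ hξ => ?_]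
    · simp_rw [norm_gradient]
    · rw [norm_gradient, image_eq_zero_of_notMem_tsupport (f := fderiv ℝ u)
        fun h => hξ (hsupp (tsupport_fderiv_subset ℝ h))]
      simp [zero_rpow (by linarith : p ≠ 0)]
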